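/- arXiv:1901.09412 — 4 statements merged into one kernel-verified Lean document; each statement's English description precedes it below -/
import Mathlib

section
/- Every sequence of k(n-1)^2 + 1 integers contains a subsequence of cardinality at least n which is k-singular, i.e., whose terms are either all equal, or, when sorted increasingly, any two consecutive terms differ by at least k. -/
/-!
Pigeonholing the `k(n-1)^2 + 1` terms by their residue mod `k` yields more than `(n-1)^2` terms
in one residue class. Among these, either some value occurs at least `n` times, or at least `n`
distinct values occur; distinct integers that are congruent mod `k` differ by at least `k`.
-/

/-- A finite multiset of integers is `k`-singular if all its elements are equal,
or its elements are pairwise distinct and any two distinct elements differ by at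
least `k` (equivalently, when sorted increasingly, consecutive terms differ by at
least `k`). -/
def KSingular (k : ℤ) (m : Multiset ℤ) : Prop :=
  (∀ x ∈ m, ∀ y ∈ m, x = y) ∨
  (m.Nodup ∧ ∀ x ∈ m, ∀ y ∈ m, x ≠ y → k ≤ |x - y|)

open Finset

theorem Finset.exists_subset_const_or_injOn_of_mul_lt_card {α β : Type*} [DecidableEq β]
    (f : α → β) {s : Finset α} {p q : ℕ} (hs : p * q < #s) :
    ∃ t ⊆ s, (p < #t ∧ ∃ b, ∀ a ∈ t, f a = b) ∨ (q < #t ∧ Set.InjOn f t) := by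
  by_cases hfiber : ∃ b, p < #{a ∈ s | f a = b}
  · obtain ⟨b, hb⟩ := hfiber
    exact ⟨_, filter_subset _ _, Or.inl ⟨hb, b, fun a ha => (mem_filter.1 ha).2⟩⟩
  push Not at hfiber
  have himage : q < #(s.image f) :=
    Nat.lt_of_mul_lt_mul_left (hs.trans_le (card_le_mul_card_image s p fun b _ => hfiber b))
  obtain ⟨t, hts, hinj, himg⟩ :=
    exists_subset_injOn_image_eq_of_surjOn (s : Set α) (s.image f)
      (by rw [coe_image]; exact Set.surjOn_image f s)
  refine ⟨t, by exact_mod_cast hts, Or.inr ⟨?_, hinj⟩⟩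
  rwa [← card_image_of_injOn hinj, himg]

namespace KSingular

theorem of_forall_eq {k : ℤ} {m : Multiset ℤ} (v : ℤ) (h : ∀ x ∈ m, x = v) : KSingular k m :=
  Or.inl fun x hx y hy => (h x hx).trans (h y hy).symm

theorem of_nodup_of_modEq {k : ℤ} {m : Multiset ℤ} (hm : m.Nodup)
    (h : ∀ x ∈ m, ∀ y ∈ m, x ≡ y [ZMOD k]) : KSingular k m :=
  Or.inr ⟨hm, fun x hx y hy hxy =>
    Int.le_of_dvd (abs_pos.2 (sub_ne_zero.2 hxy)) ((dvd_abs _ _).2 (h y hy x hx).dvd)⟩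

end KSingular

theorem stmt_0_general (k n : ℕ) (hk : 1 ≤ k)
    (a : Fin (k * (n - 1) ^ 2 + 1) → ℤ) :
    ∃ s : Finset (Fin (k * (n - 1) ^ 2 + 1)),
      n ≤ s.card ∧ KSingular (k : ℤ) (s.val.map a) := by
  have : NeZero k := ⟨by omega⟩
  obtain ⟨r, hr⟩ := Fintype.exists_lt_card_fiber_of_mul_lt_card
    (f := fun i => (a i : ZMod k)) (n := (n - 1) * (n - 1)) (by simp [sq])
  obtain ⟨s, hsr, hs⟩ := exists_subset_const_or_injOn_of_mul_lt_card a hr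
  have hmod : ∀ i ∈ s, ∀ j ∈ s, a i ≡ a j [ZMOD k] := fun i hi j hj =>
    (ZMod.intCast_eq_intCast_iff _ _ _).1 <|
      ((mem_filter.1 (hsr hi)).2).trans ((mem_filter.1 (hsr hj)).2).symm
  refine ⟨s, ?_⟩
  rcases hs with ⟨hcard, v, hv⟩ | ⟨hcard, hinj⟩
  · exact ⟨by omega, .of_forall_eq v (by simpa only [Multiset.forall_mem_map_iff, Finset.mem_val] using hv)⟩
  · refine ⟨by omega, .of_nodup_of_modEq (nodup_map_iff_injOn.2 hinj) ?_⟩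
    simpa only [Multiset.forall_mem_map_iff, Finset.mem_val] using hmod

/-- Every sequence of `k(n-1)^2 + 1` integers contains a `k`-singular
subsequence of cardinality at least `n`. -/
theorem stmt_0 (k n : ℕ) (hk : 1 ≤ k) (hn : 1 ≤ n)
    (a : Fin (k * (n - 1) ^ 2 + 1) → ℤ) :
    ∃ s : Finset (Fin (k * (n - 1) ^ 2 + 1)),
      n ≤ s.card ∧ KSingular (k : ℤ) (s.val.map a) :=
  stmt_0_general k n hk a
end

section
/- For every integer n ≥ 3 there exists a graph H on (n-1)^2 vertices whose vertex set is partitioned into n-1 classes of size n-1 each, such that any two vertices in the same class have equal degree in H and any two vertices in distinct classes have distinct degrees in H. -/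
attribute [local instance] Classical.propDecidable

/-!
Take the vertices to be pairs `(i, j)` with `i, j < m`, the class of `(i, j)` being `i`, and join
two distinct vertices `(i, j)`, `(i', j')` whenever `i + i' ≥ m`. A vertex of class `i` is then
adjacent to the `i * m` vertices of the classes `m - i, …, m - 1`, except itself when `2 * i ≥ m`,
so its degree `i * m - [2 * i ≥ m]` depends only on `i` and is strictly increasing in it.
-/

open Finset SimpleGraph

lemma Fin.card_filter_le_add {m i : ℕ} (hi : i ≤ m) : #{k : Fin m | m ≤ i + k} = i := by
  have h := card_filter_add_card_filter_not (s := (univ : Finset (Fin m))) fun k => (k : ℕ) < m - i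
  simp only [not_lt, Fin.card_filter_val_lt, card_univ, Fintype.card_fin] at h
  have : #{k : Fin m | m ≤ i + k} = #{k : Fin m | m - i ≤ k} := by
    congr 1; ext k; simp; omega
  omega

namespace SimpleGraph

def blockDegree (m i : ℕ) : ℕ := i * m - if m ≤ 2 * i then 1 else 0

def blockGraph (m : ℕ) : SimpleGraph (Fin m × Fin m) where
  Adj p q := p ≠ q ∧ m ≤ (p.1 : ℕ) + q.1
  symm := ⟨fun _ _ h => ⟨h.1.symm, by rw [add_comm]; exact h.2⟩⟩
  loopless := ⟨fun _ h => h.1 rfl⟩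

variable {m : ℕ}

lemma blockGraph_adj {p q : Fin m × Fin m} :
    (blockGraph m).Adj p q ↔ p ≠ q ∧ m ≤ (p.1 : ℕ) + q.1 := Iff.rfl

lemma blockGraph_neighborFinset (p : Fin m × Fin m)
    [Fintype ((blockGraph m).neighborSet p)] :
    (blockGraph m).neighborFinset p =
      ((univ.filter fun i : Fin m => m ≤ (p.1 : ℕ) + i) ×ˢ univ).erase p := by
  ext q
  simp only [mem_neighborFinset, blockGraph_adj, mem_erase, mem_product, mem_filter, mem_univ,
    true_and, and_true, ne_comm]

lemma blockGraph_degree (p : Fin m × Fin m) [Fintype ((blockGraph m).neighborSet p)] :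
    (blockGraph m).degree p = blockDegree m p.1 := by
  rw [← card_neighborFinset_eq_degree, blockGraph_neighborFinset, blockDegree]
  have hcard :
      #((univ.filter fun i : Fin m => m ≤ (p.1 : ℕ) + i) ×ˢ (univ : Finset (Fin m))) = p.1 * m := by
    rw [card_product, Fin.card_filter_le_add p.1.isLt.le, card_univ, Fintype.card_fin]
  split_ifs with h
  · rw [card_erase_of_mem (by simpa [two_mul] using h), hcard]
  · rw [erase_eq_of_notMem (by simpa [two_mul] using h), hcard, Nat.sub_zero]

lemma strictMono_blockDegree :
    StrictMono fun i : Fin m => blockDegree m i := by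
  intro i j hij
  have hj := j.isLt
  have : (i + 1 : ℕ) * m ≤ j * m := Nat.mul_le_mul_right m hij
  simp only [add_mul, one_mul] at this
  simp only [blockDegree]
  split_ifs <;> omega

end SimpleGraph

theorem exists_graph_degree_eq_iff_of_equiv {V : Type*} [Fintype V] {m : ℕ}
    (e : V ≃ Fin m × Fin m) :
    ∃ (H : SimpleGraph V) (c : V → Fin m),
      (∀ i : Fin m, (univ.filter fun v => c v = i).card = m) ∧
      (∀ u v : V, c u = c v ↔ H.degree u = H.degree v) := by
  refine ⟨(blockGraph m).comap e, fun v => (e v).1, fun i => ?_, fun u v => ?_⟩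
  · calc (univ.filter fun v => (e v).1 = i).card
        = (({i} : Finset (Fin m)) ×ˢ (univ : Finset (Fin m))).card :=
          card_equiv e (by simp [Prod.ext_iff, eq_comm])
      _ = m := by simp
  · have hdeg (w : V) [Fintype (((blockGraph m).comap e).neighborSet w)] :
        ((blockGraph m).comap e).degree w = (blockGraph m).degree (e w) :=
      (Iso.degree_eq (Iso.comap e _) w).symm
    rw [hdeg, hdeg, blockGraph_degree, blockGraph_degree, strictMono_blockDegree.injective.eq_iff]

theorem stmt_7_general (n : ℕ) :
    ∃ (H : SimpleGraph (Fin ((n - 1) ^ 2)))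
      (c : Fin ((n - 1) ^ 2) → Fin (n - 1)),
      (∀ i : Fin (n - 1),
        (Finset.univ.filter fun v => c v = i).card = n - 1) ∧
      (∀ u v : Fin ((n - 1) ^ 2), c u = c v ↔ H.degree u = H.degree v) :=
  exists_graph_degree_eq_iff_of_equiv ((finCongr (sq _)).trans finProdFinEquiv.symm)

/-- For every `n ≥ 3` there exists a graph `H` on `(n-1)^2` vertices whose
vertex set is partitioned into `n - 1` classes of size `n - 1` each, such that
two vertices have equal degree in `H` iff they lie in the same class. -/
theorem stmt_7 (n : ℕ) (hn : 3 ≤ n) :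
    ∃ (H : SimpleGraph (Fin ((n - 1) ^ 2)))
      (c : Fin ((n - 1) ^ 2) → Fin (n - 1)),
      (∀ i : Fin (n - 1),
        (Finset.univ.filter fun v => c v = i).card = n - 1) ∧
      (∀ u v : Fin ((n - 1) ^ 2), c u = c v ↔ H.degree u = H.degree v) :=
  stmt_7_general n
end

section
/- Let F be a graph on 5 vertices such that F contains no triangle K_3 and the complement of F contains no claw K_{1,3}. Then F is isomorphic to the 5-cycle C_5 or to the complete bipartite graph K_{2,3}. -/
/-- `F` contains a claw `K_{1,3}` as a subgraph: a vertex adjacent to three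
distinct vertices. -/
def HasClawSub {V : Type*} (F : SimpleGraph V) : Prop :=
  ∃ v a b c : V, a ≠ b ∧ a ≠ c ∧ b ≠ c ∧ F.Adj v a ∧ F.Adj v b ∧ F.Adj v c

/-!
Claw-freeness of the complement says that every vertex is adjacent to one of any three other
vertices; in particular every degree is at least `2`.  If some vertex `v` has three neighbours
`a, b, c`, these are pairwise nonadjacent, so each of them is adjacent to the fifth vertex `w`,
while `v ≁ w`: this is `K_{2,3}` with parts `{v, w}` and `{a, b, c}`.  Otherwise every degree is
exactly `2`, and `F` has no `4`-cycle, because the fifth vertex would be adjacent to one of its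
vertices and give it degree `3`.  Following the neighbours of any vertex then traces a `5`-cycle.
-/

namespace SimpleGraph

variable {V : Type*} {F : SimpleGraph V}

theorem not_adj_of_cliqueFree_three (ht : F.CliqueFree 3) {a b c : V} (hab : F.Adj a b)
    (hbc : F.Adj b c) : ¬F.Adj a c := by
  classical
  exact fun hac => ht {a, b, c} (is3Clique_triple_iff.mpr ⟨hab, hac, hbc⟩)

theorem adj_of_not_hasClawSub_compl (hc : ¬HasClawSub Fᶜ) {x a b c : V} (hxa : x ≠ a)
    (hxb : x ≠ b) (hxc : x ≠ c) (hab : a ≠ b) (hac : a ≠ c) (hbc : b ≠ c) (ha : ¬F.Adj x a)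
    (hb : ¬F.Adj x b) : F.Adj x c := by
  by_contra hc'
  exact hc ⟨x, a, b, c, hab, hac, hbc, (compl_adj F x a).mpr ⟨hxa, ha⟩,
    (compl_adj F x b).mpr ⟨hxb, hb⟩, (compl_adj F x c).mpr ⟨hxc, hc'⟩⟩

theorem degree_le_two_of_not_hasClawSub (h : ¬HasClawSub F) (v : V)
    [Fintype (F.neighborSet v)] : F.degree v ≤ 2 := by
  by_contra! hlt
  obtain ⟨a, ha, b, hb, c, hc, hab, hac, hbc⟩ := Finset.two_lt_card.mp hlt
  rw [mem_neighborFinset] at ha hb hc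
  exact h ⟨v, a, b, c, hab, hac, hbc, ha, hb, hc⟩

theorem card_le_degree_add_three [Fintype V] [DecidableRel F.Adj] (hc : ¬HasClawSub Fᶜ)
    (v : V) : Fintype.card V ≤ F.degree v + 3 := by
  classical
  have := degree_le_two_of_not_hasClawSub hc v
  rw [degree_compl] at this
  omega

theorem exists_ne_adj_of_two_le_degree [Fintype V] [DecidableRel F.Adj] {v : V}
    (hv : 2 ≤ F.degree v) (u : V) : ∃ w, F.Adj v w ∧ w ≠ u := by
  obtain ⟨w, hw, hwu⟩ := (Finset.one_lt_card_iff_nontrivial.mp hv).exists_ne u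
  exact ⟨w, (mem_neighborFinset F v w).mp hw, hwu⟩

theorem exists_ne_of_card_eq_five [Fintype V] (h5 : Fintype.card V = 5) (a b c d : V) :
    ∃ w, w ≠ a ∧ w ≠ b ∧ w ≠ c ∧ w ≠ d := by
  classical
  have hlt : ({a, b, c, d} : Finset V).card < (Finset.univ : Finset V).card :=
    Finset.card_le_four.trans_lt (by simp [h5])
  obtain ⟨w, -, hw⟩ := Finset.exists_mem_notMem_of_card_lt_card hlt
  simp only [Finset.mem_insert, Finset.mem_singleton, not_or] at hw
  exact ⟨w, hw⟩

theorem nonempty_iso_of_injective {W : Type*} [Fintype V] [Fintype W] {G : SimpleGraph W}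
    (f : W → V) (hf : Function.Injective f) (hcard : Fintype.card W = Fintype.card V)
    (hadj : ∀ x y, F.Adj (f x) (f y) ↔ G.Adj x y) : Nonempty (F ≃g G) :=
  ⟨RelIso.symm ⟨Equiv.ofBijective f ((Fintype.bijective_iff_injective_and_card f).mpr
    ⟨hf, hcard⟩), hadj _ _⟩⟩

theorem nonempty_iso_completeBipartiteGraph_of_hasClawSub [Fintype V]
    (h5 : Fintype.card V = 5) (ht : F.CliqueFree 3) (hc : ¬HasClawSub Fᶜ) (hF : HasClawSub F) :
    Nonempty (F ≃g completeBipartiteGraph (Fin 2) (Fin 3)) := by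
  obtain ⟨v, a, b, c, hab, hac, hbc, hva, hvb, hvc⟩ := hF
  obtain ⟨w, hwv, hwa, hwb, hwc⟩ := exists_ne_of_card_eq_five h5 v a b c
  have hab' : ¬F.Adj a b := not_adj_of_cliqueFree_three ht hva.symm hvb
  have hac' : ¬F.Adj a c := not_adj_of_cliqueFree_three ht hva.symm hvc
  have hbc' : ¬F.Adj b c := not_adj_of_cliqueFree_three ht hvb.symm hvc
  have haw : F.Adj a w := adj_of_not_hasClawSub_compl hc hab hac hwa.symm hbc hwb.symm hwc.symm
    hab' hac'
  have hbw : F.Adj b w := adj_of_not_hasClawSub_compl hc hab.symm hbc hwb.symm hac hwa.symm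
    hwc.symm (fun h => hab' h.symm) hbc'
  have hcw : F.Adj c w := adj_of_not_hasClawSub_compl hc hac.symm hbc.symm hwc.symm hab hwa.symm
    hwb.symm (fun h => hac' h.symm) (fun h => hbc' h.symm)
  have hvw : ¬F.Adj v w := not_adj_of_cliqueFree_three ht hva haw
  refine nonempty_iso_of_injective (Sum.elim ![v, w] ![a, b, c]) ?_ (by simp [h5]) ?_
  · rintro (i | i) (j | j) h <;> fin_cases i <;> fin_cases j <;>
      simp_all [eq_comm, hva.ne, hvb.ne, hvc.ne]
  · rintro (i | i) (j | j) <;> fin_cases i <;> fin_cases j <;> simp [*, adj_comm]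

theorem eq_of_adj_of_adj_of_not_hasClawSub [Fintype V]
    (h5 : Fintype.card V = 5) (hF : ¬HasClawSub F) (hc : ¬HasClawSub Fᶜ) {v x a b : V}
    (hab : a ≠ b) (hva : F.Adj v a) (hvb : F.Adj v b) (hxa : F.Adj x a) (hxb : F.Adj x b) :
    x = v := by
  by_contra hxv
  obtain ⟨u, huv, hua, hub, hux⟩ := exists_ne_of_card_eq_five h5 v a b x
  by_cases huv' : F.Adj u v
  · exact hF ⟨v, a, b, u, hab, hua.symm, hub.symm, hva, hvb, huv'.symm⟩
  by_cases hua' : F.Adj u a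
  · exact hF ⟨a, v, x, u, Ne.symm hxv, huv.symm, hux.symm, hva.symm, hxa.symm, hua'.symm⟩
  have hub' : F.Adj u b := adj_of_not_hasClawSub_compl hc huv hua hub hva.ne hvb.ne hab
    huv' hua'
  exact hF ⟨b, v, x, u, Ne.symm hxv, huv.symm, hux.symm, hvb.symm, hxb.symm, hub'.symm⟩

theorem nonempty_iso_cycleGraph_of_not_hasClawSub [Fintype V]
    (h5 : Fintype.card V = 5) (ht : F.CliqueFree 3) (hc : ¬HasClawSub Fᶜ) (hF : ¬HasClawSub F) :
    Nonempty (F ≃g cycleGraph 5) := by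
  classical
  have hdeg (u : V) : 2 ≤ F.degree u := by have := card_le_degree_add_three hc u; omega
  obtain ⟨v₀⟩ : Nonempty V := Fintype.card_pos_iff.mp (by omega)
  obtain ⟨v₁, h01, -⟩ := exists_ne_adj_of_two_le_degree (hdeg v₀) v₀
  obtain ⟨v₄, h04, ne41⟩ := exists_ne_adj_of_two_le_degree (hdeg v₀) v₁
  obtain ⟨v₂, h12, ne20⟩ := exists_ne_adj_of_two_le_degree (hdeg v₁) v₀
  obtain ⟨v₃, h43, ne30⟩ := exists_ne_adj_of_two_le_degree (hdeg v₄) v₀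
  have n14 : ¬F.Adj v₁ v₄ := not_adj_of_cliqueFree_three ht h01.symm h04
  have ne24 : v₂ ≠ v₄ := by rintro rfl; exact n14 h12
  have ne31 : v₃ ≠ v₁ := by rintro rfl; exact n14 h43.symm
  have ne23 : v₂ ≠ v₃ := by
    rintro rfl
    exact ne20 <|
      eq_of_adj_of_adj_of_not_hasClawSub h5 hF hc (Ne.symm ne41) h01 h04 h12.symm h43.symm
  have n02 : ¬F.Adj v₀ v₂ := fun h =>
    hF ⟨v₀, v₁, v₄, v₂, Ne.symm ne41, h12.ne, Ne.symm ne24, h01, h04, h⟩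
  have n03 : ¬F.Adj v₀ v₃ := fun h =>
    hF ⟨v₀, v₁, v₄, v₃, Ne.symm ne41, Ne.symm ne31, h43.ne, h01, h04, h⟩
  have n13 : ¬F.Adj v₁ v₃ := fun h =>
    hF ⟨v₁, v₀, v₂, v₃, Ne.symm ne20, Ne.symm ne30, ne23, h01.symm, h12, h⟩
  have n24 : ¬F.Adj v₂ v₄ := fun h =>
    hF ⟨v₄, v₀, v₃, v₂, Ne.symm ne30, Ne.symm ne20, ne23.symm, h04.symm, h43, h.symm⟩
  have h23 : F.Adj v₂ v₃ := adj_of_not_hasClawSub_compl hc ne20 ne24 ne23 h04.ne ne30.symm h43.ne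
    (fun h => n02 h.symm) n24
  refine nonempty_iso_of_injective ![v₀, v₁, v₂, v₃, v₄] ?_ (by simp [h5]) ?_
  · intro i j h
    fin_cases i <;> fin_cases j <;> simp_all [eq_comm, h01.ne, h04.ne, h12.ne, h43.ne]
  · intro i j
    fin_cases i <;> fin_cases j <;> simp +decide [*] <;> rw [adj_comm] <;> assumption

end SimpleGraph

theorem stmt_9_general {V : Type} [Fintype V] (F : SimpleGraph V)
    (h5 : Fintype.card V = 5) (ht : F.CliqueFree 3) (hc : ¬ HasClawSub Fᶜ) :
    Nonempty (F ≃g SimpleGraph.cycleGraph 5) ∨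
    Nonempty (F ≃g completeBipartiteGraph (Fin 2) (Fin 3)) := by
  by_cases hF : HasClawSub F
  · exact Or.inr (F.nonempty_iso_completeBipartiteGraph_of_hasClawSub h5 ht hc hF)
  · exact Or.inl (F.nonempty_iso_cycleGraph_of_not_hasClawSub h5 ht hc hF)

/-- If `F` is a graph on 5 vertices containing no triangle, whose complement
contains no claw, then `F` is isomorphic to `C_5` or to `K_{2,3}`. -/
theorem stmt_9 {V : Type} [Fintype V] [DecidableEq V] (F : SimpleGraph V)
    (h5 : Fintype.card V = 5) (ht : F.CliqueFree 3) (hc : ¬ HasClawSub Fᶜ) :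
    Nonempty (F ≃g SimpleGraph.cycleGraph 5) ∨
    Nonempty (F ≃g completeBipartiteGraph (Fin 2) (Fin 3)) :=
  stmt_9_general F h5 ht hc
end

section
/- The unique graph F on 6 vertices such that F is triangle-free and the complement of F is claw-free (contains no K_{1,3} subgraph) is the complete bipartite graph K_{3,3}. Consequently, on 7 vertices no such graph exists; i.e., every graph on 7 vertices contains a triangle or its complement contains a claw. -/
open Finset

namespace SimpleGraph

variable {V : Type*} {G : SimpleGraph V}

theorem hasClawSub_of_two_lt_degree {v : V} [Fintype (G.neighborSet v)]
    (h : 2 < G.degree v) : HasClawSub G := by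
  obtain ⟨a, ha, b, hb, c, hc, hab, hac, hbc⟩ := two_lt_card.mp h
  rw [mem_neighborFinset] at ha hb hc
  exact ⟨v, a, b, c, hab, hac, hbc, ha, hb, hc⟩

variable [Fintype V]

theorem card_le_degree_add_three_of_not_hasClawSub_compl [DecidableRel G.Adj]
    (h : ¬ HasClawSub Gᶜ) (v : V) : Fintype.card V ≤ G.degree v + 3 := by
  classical
  have : Gᶜ.degree v ≤ 2 := not_lt.mp (mt hasClawSub_of_two_lt_degree h)
  rw [degree_compl] at this
  omega

namespace CliqueFree

variable [DecidableEq V] [DecidableRel G.Adj] {u v : V}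

theorem disjoint_neighborFinset (hG : G.CliqueFree 3) (huv : G.Adj u v) :
    Disjoint (G.neighborFinset u) (G.neighborFinset v) := by
  refine Finset.disjoint_left.mpr fun w hu hv => hG {u, v, w} ?_
  rw [mem_neighborFinset] at hu hv
  exact is3Clique_triple_iff.mpr ⟨huv, hu, hv⟩

theorem degree_add_degree_le (hG : G.CliqueFree 3) (huv : G.Adj u v) :
    G.degree u + G.degree v ≤ Fintype.card V := by
  rw [← card_neighborFinset_eq_degree, ← card_neighborFinset_eq_degree,
    ← card_union_of_disjoint (hG.disjoint_neighborFinset huv)]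
  exact card_le_univ _

theorem neighborFinset_eq_compl (hG : G.CliqueFree 3) (huv : G.Adj u v)
    (hcard : Fintype.card V ≤ G.degree u + G.degree v) :
    G.neighborFinset v = (G.neighborFinset u)ᶜ := by
  refine eq_of_subset_of_card_le
    (subset_compl_iff_disjoint_right.mpr (hG.disjoint_neighborFinset huv).symm) ?_
  rw [card_compl, card_neighborFinset_eq_degree, card_neighborFinset_eq_degree]
  omega

end CliqueFree

def isoCompleteBipartiteGraphOfAdjIff (p : V → Prop) [DecidablePred p]
    (h : ∀ x y, G.Adj x y ↔ (p x ↔ ¬ p y)) :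
    G ≃g completeBipartiteGraph {x // p x} {x // ¬ p x} where
  toEquiv := (Equiv.sumCompl p).symm
  map_rel_iff' {x y} := by
    by_cases hx : p x <;> by_cases hy : p y <;> simp [Equiv.sumCompl, hx, hy, h]

theorem CliqueFree.nonempty_iso_completeBipartiteGraph [DecidableEq V] [DecidableRel G.Adj]
    {d : ℕ} (hG : G.CliqueFree 3) (hreg : G.IsRegularOfDegree d)
    (hcard : Fintype.card V = 2 * d) (hd : 0 < d) :
    Nonempty (G ≃g completeBipartiteGraph (Fin d) (Fin d)) := by
  have hcompl {u v : V} (huv : G.Adj u v) : G.neighborFinset v = (G.neighborFinset u)ᶜ :=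
    hG.neighborFinset_eq_compl huv (by rw [hreg u, hreg v]; omega)
  obtain ⟨v⟩ : Nonempty V := Fintype.card_pos_iff.mp (by omega)
  set A := G.neighborFinset v
  have hA : ∀ a ∈ A, G.neighborFinset a = Aᶜ := fun a ha =>
    hcompl ((mem_neighborFinset _ _ _).mp ha)
  obtain ⟨a, ha⟩ : A.Nonempty :=
    card_pos.mp (by rw [card_neighborFinset_eq_degree, hreg v]; exact hd)
  have hAc : ∀ x ∉ A, G.neighborFinset x = A := by
    intro x hx
    rw [← mem_compl, ← hA a ha, mem_neighborFinset] at hx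
    rw [hcompl hx, hA a ha, compl_compl]
  have hadj (x y : V) : G.Adj x y ↔ (x ∈ A ↔ y ∉ A) := by
    rw [← mem_neighborFinset]
    by_cases hx : x ∈ A
    · simp [hx, hA x hx]
    · simp [hx, hAc x hx]
  have hcardA : Fintype.card {x // x ∈ A} = d := by
    rw [Fintype.card_coe, card_neighborFinset_eq_degree, hreg v]
  have hcardAc : Fintype.card {x // x ∉ A} = d := by
    rw [Fintype.card_subtype_compl, hcardA]; omega
  exact ⟨(isoCompleteBipartiteGraphOfAdjIff _ hadj).trans
    (completeBipartiteGraphCongr (Fintype.equivFinOfCardEq hcardA)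
      (Fintype.equivFinOfCardEq hcardAc))⟩

theorem degree_le_three_of_cliqueFree_of_not_hasClawSub_compl
    [DecidableEq V] [DecidableRel G.Adj]
    (hG : G.CliqueFree 3) (hclaw : ¬ HasClawSub Gᶜ) (hn : 4 ≤ Fintype.card V) (v : V) :
    G.degree v ≤ 3 := by
  have hv := card_le_degree_add_three_of_not_hasClawSub_compl hclaw v
  obtain ⟨u, hvu⟩ := G.degree_pos_iff_exists_adj v |>.mp (by omega)
  have hu := card_le_degree_add_three_of_not_hasClawSub_compl hclaw u
  have := hG.degree_add_degree_le hvu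
  omega

end SimpleGraph

open SimpleGraph

/-- The unique graph on 6 vertices that is triangle-free with claw-free
complement is `K_{3,3}`; consequently, every graph on 7 vertices contains a
triangle or its complement contains a claw. -/
theorem stmt_10 :
    (∀ (V : Type) [Fintype V] [DecidableEq V] (F : SimpleGraph V),
      Fintype.card V = 6 → F.CliqueFree 3 → ¬ HasClawSub Fᶜ →
      Nonempty (F ≃g completeBipartiteGraph (Fin 3) (Fin 3))) ∧
    (∀ (V : Type) [Fintype V] (F : SimpleGraph V),
      Fintype.card V = 7 → ¬ F.CliqueFree 3 ∨ HasClawSub Fᶜ) := by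
  constructor
  · intro V _ _ F hcard hF hclaw
    classical
    refine hF.nonempty_iso_completeBipartiteGraph (fun v => ?_) hcard (by norm_num)
    have := card_le_degree_add_three_of_not_hasClawSub_compl hclaw v
    have := degree_le_three_of_cliqueFree_of_not_hasClawSub_compl hF hclaw (by omega) v
    omega
  · intro V _ F hcard
    classical
    rw [or_iff_not_imp_left, not_not]
    intro hF
    by_contra hclaw
    obtain ⟨v⟩ : Nonempty V := Fintype.card_pos_iff.mp (by omega)
    have := card_le_degree_add_three_of_not_hasClawSub_compl hclaw v
    have := degree_le_three_of_cliqueFree_of_not_hasClawSub_compl hF hclaw (by omega) v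
    omega
end
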